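/- arXiv:1206.3392 — 4 statements merged into one kernel-verified Lean document; each statement's English description precedes it below -/
import Mathlib

section
/- Let U and V be independent real-valued random variables, and let + denote addition over ℝ. Then U+V is independent of U and U+V is independent of V if and only if U and V are almost surely constant, i.e., there exist a, b ∈ ℝ such that Pr[U=a] = Pr[V=b] = 1. -/
open MeasureTheory ProbabilityTheory

/-!
If `U ⟂ V`, `U + V ⟂ U` and `0 < P(U ≤ c) < 1`, pick `e > c` with `P(U > e) > 0`. Conditioning on
`U ≤ c` and on `U > e` changes neither the law of `V` nor that of `U + V`, which gives
`F_V(x + (e - c)) ≤ F_{U+V}(x + e) ≤ F_V(x)`: the distribution function of `V` would be periodic,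
impossible for a monotone function with limits `0` and `1`. So the law of `U` takes only the
values `0` and `1` on half-lines, hence on all Borel sets, and is a Dirac mass. Conversely an
a.s. constant variable is independent of everything.
-/

open Set

lemma MeasureTheory.IsZeroOneMeasure.of_generateFrom {α : Type*} {m : MeasurableSpace α}
    {ν : Measure α} [IsProbabilityMeasure ν] {C : Set (Set α)}
    (hgen : m = MeasurableSpace.generateFrom C) (hC : ∀ s ∈ C, ν s = 0 ∨ ν s = 1) :
    IsZeroOneMeasure ν := by
  subst hgen
  refine ⟨fun s hs => ?_⟩
  induction s, hs using MeasurableSpace.generateFrom_induction with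
  | hC s hs => exact hC s hs
  | empty => simp
  | compl s hs ih =>
    rw [prob_compl_eq_zero_iff hs, prob_compl_eq_one_iff hs]
    exact ih.symm
  | iUnion f _ ih =>
    by_cases h : ∃ i, ν (f i) = 1
    · obtain ⟨i, hi⟩ := h
      exact .inr (le_antisymm prob_le_one (hi ▸ measure_mono (subset_iUnion f i)))
    · exact .inl (measure_iUnion_null fun i => (ih i).resolve_right fun hi => h ⟨i, hi⟩)

lemma MeasureTheory.exists_eq_dirac_of_measure_Iic {ν : Measure ℝ} [IsProbabilityMeasure ν]
    (h : ∀ c, ν (Iic c) = 0 ∨ ν (Iic c) = 1) : ∃ a, ν = Measure.dirac a := by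
  have : IsZeroOneMeasure ν :=
    .of_generateFrom ((BorelSpace.measurable_eq).trans (borel_eq_generateFrom_Iic ℝ))
      (by rintro _ ⟨c, rfl⟩; exact h c)
  exact IsZeroOneMeasure.exists_eq_dirac

lemma Monotone.map_le_of_map_add_le {α β : Type*} [AddCommGroup α] [LinearOrder α]
    [IsOrderedAddMonoid α] [Archimedean α] [Preorder β] {f : α → β} (hf : Monotone f) {δ : α}
    (hδ : 0 < δ) (h : ∀ x, f (x + δ) ≤ f x) (x y : α) : f y ≤ f x := by
  have hiter : ∀ n : ℕ, f (x + n • δ) ≤ f x := by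
    intro n
    induction n with
    | zero => simp
    | succ n ih => rw [succ_nsmul, ← add_assoc]; exact (h _).trans ih
  obtain ⟨n, hn⟩ := Archimedean.arch (y - x) hδ
  exact (hf (sub_le_iff_le_add'.mp hn)).trans (hiter n)

lemma MeasureTheory.not_forall_measure_Iic_add_le {ν : Measure ℝ} [IsProbabilityMeasure ν]
    {δ : ℝ} (hδ : 0 < δ) : ¬ ∀ x, ν (Iic (x + δ)) ≤ ν (Iic x) := by
  intro h
  have hconst : ⇑(cdf ν) = fun _ => cdf ν 0 := by
    have hcdf : ∀ x, cdf ν (x + δ) ≤ cdf ν x := fun x => by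
      simp only [cdf_eq_real, measureReal_def]
      exact ENNReal.toReal_mono (measure_ne_top ν _) (h x)
    have hmono := (cdf ν).mono
    exact funext fun x => le_antisymm (hmono.map_le_of_map_add_le hδ hcdf 0 x)
      (hmono.map_le_of_map_add_le hδ hcdf x 0)
  have h0 := tendsto_cdf_atBot ν
  have h1 := tendsto_cdf_atTop ν
  rw [hconst, tendsto_const_nhds_iff] at h0 h1
  exact zero_ne_one (h0.symm.trans h1)

lemma MeasureTheory.exists_gt_measure_Ioi_ne_zero {ν : Measure ℝ} [IsProbabilityMeasure ν]
    {c : ℝ} (h : ν (Iic c) ≠ 1) : ∃ e, c < e ∧ ν (Ioi e) ≠ 0 := by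
  by_contra! hnull
  refine h ((prob_compl_eq_zero_iff measurableSet_Iic).mp ?_)
  have hunion : (Iic c)ᶜ = ⋃ n : ℕ, Ioi (c + 1 / ((n : ℝ) + 1)) := by
    ext x
    simp only [compl_Iic, mem_Ioi, mem_iUnion]
    constructor
    · intro hx
      obtain ⟨n, hn⟩ := exists_nat_one_div_lt (sub_pos.mpr hx)
      exact ⟨n, by linarith⟩
    · rintro ⟨n, hn⟩
      have : (0 : ℝ) < 1 / ((n : ℝ) + 1) := Nat.one_div_pos_of_nat
      linarith
  rw [hunion]
  exact measure_iUnion_null fun n => hnull _ (lt_add_of_pos_right c Nat.one_div_pos_of_nat)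

lemma ProbabilityTheory.IndepFun.measure_preimage_le_of_inter_subset {Ω β γ κ : Type*}
    {mΩ : MeasurableSpace Ω} {mβ : MeasurableSpace β} {mγ : MeasurableSpace γ}
    {mκ : MeasurableSpace κ} {μ : Measure Ω} [IsFiniteMeasure μ] {X : Ω → β} {Y : Ω → γ}
    {Z : Ω → κ} (hXZ : IndepFun X Z μ) (hYZ : IndepFun Y Z μ) {s : Set β} {t : Set γ}
    {B : Set κ} (hs : MeasurableSet s) (ht : MeasurableSet t) (hB : MeasurableSet B)
    (hB0 : μ (Z ⁻¹' B) ≠ 0) (hsub : X ⁻¹' s ∩ Z ⁻¹' B ⊆ Y ⁻¹' t) :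
    μ (X ⁻¹' s) ≤ μ (Y ⁻¹' t) := by
  have hle := measure_mono (μ := μ) (subset_inter hsub inter_subset_right)
  rw [hXZ.measure_inter_preimage_eq_mul _ _ hs hB,
    hYZ.measure_inter_preimage_eq_mul _ _ ht hB] at hle
  exact (ENNReal.mul_le_mul_iff_left hB0 (measure_ne_top μ _)).mp hle

namespace ProbabilityTheory

variable {Ω : Type*} [MeasurableSpace Ω] {μ : Measure Ω} [IsProbabilityMeasure μ] {U V : Ω → ℝ}

lemma measure_Iic_add_le_of_indepFun_add (hUV : IndepFun U V μ)
    (h : IndepFun (fun ω => U ω + V ω) U μ) {c e : ℝ} (hc : μ (U ⁻¹' Iic c) ≠ 0)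
    (he : μ (U ⁻¹' Ioi e) ≠ 0) (x : ℝ) :
    μ (V ⁻¹' Iic (x + (e - c))) ≤ μ (V ⁻¹' Iic x) :=
  calc μ (V ⁻¹' Iic (x + (e - c)))
      ≤ μ ((fun ω => U ω + V ω) ⁻¹' Iic (x + e)) :=
        hUV.symm.measure_preimage_le_of_inter_subset h measurableSet_Iic measurableSet_Iic
          measurableSet_Iic hc fun ω ⟨hV, hU⟩ => by
            simp only [mem_preimage, mem_Iic] at hV hU ⊢; linarith
    _ ≤ μ (V ⁻¹' Iic x) :=
        h.measure_preimage_le_of_inter_subset hUV.symm measurableSet_Iic measurableSet_Iic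
          measurableSet_Ioi he fun ω ⟨hW, hU⟩ => by
            simp only [mem_preimage, mem_Iic, mem_Ioi] at hW hU ⊢; linarith

lemma measure_Iic_eq_zero_or_one_of_indepFun_add (hU : Measurable U) (hV : Measurable V)
    (hUV : IndepFun U V μ) (h : IndepFun (fun ω => U ω + V ω) U μ) (c : ℝ) :
    μ.map U (Iic c) = 0 ∨ μ.map U (Iic c) = 1 := by
  by_contra! hne
  have := Measure.isProbabilityMeasure_map (μ := μ) hU.aemeasurable
  have := Measure.isProbabilityMeasure_map (μ := μ) hV.aemeasurable
  obtain ⟨e, hce, he⟩ := exists_gt_measure_Ioi_ne_zero hne.2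
  rw [Measure.map_apply hU measurableSet_Iic] at hne
  rw [Measure.map_apply hU measurableSet_Ioi] at he
  refine not_forall_measure_Iic_add_le (ν := μ.map V) (sub_pos.mpr hce) fun x => ?_
  simp only [Measure.map_apply hV measurableSet_Iic]
  exact measure_Iic_add_le_of_indepFun_add hUV h hne.1 he x

lemma exists_measure_eq_one_of_indepFun_add (hU : Measurable U) (hV : Measurable V)
    (hUV : IndepFun U V μ) (h : IndepFun (fun ω => U ω + V ω) U μ) :
    ∃ a, μ {ω | U ω = a} = 1 := by
  have := Measure.isProbabilityMeasure_map (μ := μ) hU.aemeasurable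
  obtain ⟨a, ha⟩ := exists_eq_dirac_of_measure_Iic
    (measure_Iic_eq_zero_or_one_of_indepFun_add hU hV hUV h)
  refine ⟨a, ?_⟩
  calc μ {ω | U ω = a} = μ.map U {a} := (Measure.map_apply hU (measurableSet_singleton a)).symm
    _ = 1 := by simp [ha]

lemma ae_eq_const_of_measure_eq_one (hU : Measurable U) {a : ℝ} (h : μ {ω | U ω = a} = 1) :
    U =ᵐ[μ] fun _ => a :=
  (prob_compl_eq_zero_iff (hU (measurableSet_singleton a))).mpr h

end ProbabilityTheory

/-- Let `U` and `V` be independent real-valued random variables. Then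
`U + V` is independent of `U` and `U + V` is independent of `V` if and only if `U` and `V`
are almost surely constant, i.e. there exist `a b : ℝ` with `Pr[U = a] = Pr[V = b] = 1`. -/
theorem sum_indep_of_each_iff_as_const
    {Ω : Type*} [MeasurableSpace Ω] (μ : Measure Ω) [IsProbabilityMeasure μ]
    (U V : Ω → ℝ) (hU : Measurable U) (hV : Measurable V)
    (hUV : IndepFun U V μ) :
    (IndepFun (fun ω => U ω + V ω) U μ ∧ IndepFun (fun ω => U ω + V ω) V μ) ↔
      ∃ a b : ℝ, μ {ω | U ω = a} = 1 ∧ μ {ω | V ω = b} = 1 := by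
  constructor
  · rintro ⟨hsumU, hsumV⟩
    obtain ⟨a, ha⟩ := exists_measure_eq_one_of_indepFun_add hU hV hUV hsumU
    obtain ⟨b, hb⟩ := exists_measure_eq_one_of_indepFun_add hV hU hUV.symm
      (by simpa only [add_comm] using hsumV)
    exact ⟨a, b, ha, hb⟩
  · rintro ⟨a, b, ha, hb⟩
    have hsum : (fun ω => U ω + V ω) =ᵐ[μ] fun _ => a + b := by
      filter_upwards [ae_eq_const_of_measure_eq_one hU ha, ae_eq_const_of_measure_eq_one hV hb]
        with ω hUω hVω
      rw [hUω, hVω]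
    exact ⟨(indepFun_const_left _ U).congr hsum.symm .rfl,
      (indepFun_const_left _ V).congr hsum.symm .rfl⟩
end

section
/- Let X and Y be i.i.d. uniform {0,1}-valued random variables. Suppose p_{U|0}, p_{U|1}, p_{V|0}, p_{V|1} are probability mass functions on ℤ such that (i) p_{U|0}(k) = p_{V|0}(k) = 0 for all odd k ∈ ℤ and p_{U|1}(k) = p_{V|1}(k) = 0 for all even k ∈ ℤ, and (ii) with φ_U = (1/2)(φ_{U|0} + φ_{U|1}) and φ_V = (1/2)(φ_{V|0} + φ_{V|1}), one has φ_U φ_V = φ_{U|a} φ_V = φ_U φ_{V|a} for a ∈ {0,1}. Then the random variables (U, V, X, Y) with joint pmf p_{UVXY}(k, l, a, b) = (1/4) p_{U|a}(k) p_{V|b}(l) for k, l ∈ ℤ and a, b ∈ {0,1} satisfy: (S1) (U, X) is independent of (V, Y); (S2) U+V is independent of X and U+V is independent of Y; (S3) X⊕Y (the modulo-2 sum) almost surely equals the parity of U+V. -/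
/-
Conditionally on `X = a`, the variables `U` and `V` are independent with laws `p_{U|a}` and
`p_V = (p_{V|0} + p_{V|1}) / 2`, so `P(U + V = m, X = a) = ½ (p_{U|a} ∗ p_V)(m)`. By (ii)
the characteristic functions of `p_{U|a} ∗ p_V` and `p_U ∗ p_V` agree, and Fourier inversion on `ℤ`
makes the two convolutions equal; hence the joint pmf of `(U + V, X)` does not depend on `a`,
which is `U + V ⫫ X`, and symmetrically `U + V ⫫ Y`. (S1) is the factorisation
`p(k, l, a, b) = (½ p_{U|a}(k)) (½ p_{V|b}(l))`, and (S3) holds because `p_{U|a}` and `p_{V|b}`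
live on the residue classes `a` and `b` mod 2.
-/

open MeasureTheory ProbabilityTheory Complex

/-- The characteristic function of a pmf `p` on `ℤ`: `φ(t) = Σ_{k ∈ ℤ} p(k) e^{ikt}`. -/
noncomputable def charFunZ (p : ℤ → ℝ) (t : ℝ) : ℂ :=
  ∑' k : ℤ, (p k : ℂ) * Complex.exp (Complex.I * (k : ℂ) * (t : ℂ))

open Real

section CauchyProduct

variable {R : Type*} [NormedRing R] [CompleteSpace R] {a b : ℤ → R}

/-- `(m, k) ↦ (k, m - k)`. -/
def Int.convEquiv : ℤ × ℤ ≃ ℤ × ℤ :=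
  (Equiv.prodComm ℤ ℤ).trans (Equiv.prodShear (Equiv.refl ℤ) Equiv.subRight)

theorem summable_prod_mul_sub (ha : Summable (‖a ·‖)) (hb : Summable (‖b ·‖)) :
    Summable fun p : ℤ × ℤ => a p.2 * b (p.1 - p.2) :=
  Int.convEquiv.summable_iff.2 (summable_mul_of_summable_norm ha hb)

theorem tsum_tsum_mul_sub (ha : Summable (‖a ·‖)) (hb : Summable (‖b ·‖)) :
    ∑' m, ∑' k, a k * b (m - k) = (∑' k, a k) * ∑' k, b k := by
  rw [tsum_mul_tsum_of_summable_norm ha hb, ← Int.convEquiv.tsum_eq,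
    ← (summable_prod_mul_sub ha hb).tsum_prod]
  rfl

end CauchyProduct

noncomputable def convZ (c d : ℤ → ℝ) (m : ℤ) : ℝ :=
  ∑' k, c k * d (m - k)

section CharFunZ

variable {c d e : ℤ → ℝ}

theorem summable_norm_charFunZ_term (hc : Summable c) (t : ℝ) :
    Summable fun k : ℤ => ‖(c k : ℂ) * exp (I * k * t)‖ := by
  simpa [Complex.norm_exp] using hc.norm

theorem charFunZ_sum {ι : Type*} (s : Finset ι) {c : ι → ℤ → ℝ}
    (hc : ∀ i ∈ s, Summable (c i)) (t : ℝ) :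
    charFunZ (fun k => ∑ i ∈ s, c i k) t = ∑ i ∈ s, charFunZ (c i) t := by
  simp only [charFunZ, ofReal_sum, Finset.sum_mul]
  exact Summable.tsum_finsetSum fun i hi => (summable_norm_charFunZ_term (hc i hi) t).of_norm

theorem summable_convZ (hc : Summable c) (hd : Summable d) : Summable (convZ c d) :=
  (summable_prod_mul_sub hc.norm hd.norm).prod

theorem summable_mul_sub (hc : Summable c) (hd : Summable d) (m : ℤ) :
    Summable fun k => c k * d (m - k) :=
  (summable_prod_mul_sub hc.norm hd.norm).prod_factor m

theorem charFunZ_convZ (hc : Summable c) (hd : Summable d) (t : ℝ) :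
    charFunZ (convZ c d) t = charFunZ c t * charFunZ d t := by
  have hterm : ∀ m k : ℤ, ((c k * d (m - k) : ℝ) : ℂ) * exp (I * m * t) =
      (c k * exp (I * k * t)) * (d (m - k) * exp (I * ((m - k : ℤ) : ℂ) * t)) := by
    intro m k
    rw [mul_mul_mul_comm, ← Complex.exp_add]
    push_cast
    ring_nf
  rw [charFunZ, charFunZ, charFunZ, ← tsum_tsum_mul_sub (summable_norm_charFunZ_term hc t)
    (summable_norm_charFunZ_term hd t)]
  simp only [convZ, ofReal_tsum, ← tsum_mul_right, hterm]

theorem integral_exp_I_int_mul (n : ℤ) :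
    ∫ t in (0 : ℝ)..2 * π, exp (I * n * t) = if n = 0 then (2 * π : ℂ) else 0 := by
  split_ifs with hn
  · simp [hn]
  · have hIn : I * n ≠ 0 := mul_ne_zero I_ne_zero (Int.cast_ne_zero.2 hn)
    rw [integral_exp_mul_complex hIn, ofReal_zero, mul_zero, Complex.exp_zero,
      show I * n * ((2 * π : ℝ) : ℂ) = n * (2 * π * I) by push_cast; ring,
      exp_int_mul_two_pi_mul_I, sub_self, zero_div]

theorem integral_charFunZ_mul_exp (hc : Summable c) (m : ℤ) :
    ∫ t in (0 : ℝ)..2 * π, charFunZ c t * exp (-(I * m * t)) = 2 * π * c m := by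
  let f : ℤ → C(ℝ, ℂ) := fun k =>
    ⟨fun t => c k * exp (I * ((k - m : ℤ) : ℂ) * t), by fun_prop⟩
  have hf : ∀ t, charFunZ c t * exp (-(I * m * t)) = ∑' k, f k t := by
    intro t
    simp only [charFunZ, ← tsum_mul_right]
    refine tsum_congr fun k => ?_
    simp only [f, ContinuousMap.coe_mk, mul_assoc, ← Complex.exp_add]
    push_cast
    ring_nf
  have hf_norm : ∀ k, ‖(f k).restrict (⟨Set.uIcc 0 (2 * π), isCompact_uIcc⟩ :
      TopologicalSpace.Compacts ℝ)‖ ≤ ‖c k‖ := fun k =>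
    ((f k).restrict _).norm_le (norm_nonneg _) |>.2 fun t => by
      simp [f, Complex.norm_exp]
  simp_rw [hf]
  rw [← intervalIntegral.tsum_intervalIntegral_eq_of_summable_norm
    (hc.norm.of_nonneg_of_le (fun _ => norm_nonneg _) hf_norm)]
  simp only [f, ContinuousMap.coe_mk, intervalIntegral.integral_const_mul,
    integral_exp_I_int_mul, sub_eq_zero, mul_ite, mul_zero, tsum_ite_eq]
  ring

theorem eq_of_charFunZ_eq (hc : Summable c) (hd : Summable d) (h : charFunZ c = charFunZ d) :
    c = d := by
  funext m
  have h2π : (2 * π : ℂ) ≠ 0 := by exact_mod_cast two_pi_pos.ne'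
  have := integral_charFunZ_mul_exp hc m
  rw [h, integral_charFunZ_mul_exp hd m] at this
  exact_mod_cast (mul_left_cancel₀ h2π this).symm

theorem convZ_eq_of_charFunZ_mul_eq (hc : Summable c) (hd : Summable d) (he : Summable e)
    (h : ∀ t, charFunZ c t * charFunZ e t = charFunZ d t * charFunZ e t) :
    convZ c e = convZ d e :=
  eq_of_charFunZ_eq (summable_convZ hc he) (summable_convZ hd he) <| funext fun t => by
    rw [charFunZ_convZ hc he, charFunZ_convZ hd he, h]

end CharFunZ

section DiscreteIndependence

variable {Ω α β : Type*} [MeasurableSpace Ω] {μ : Measure Ω}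
  [MeasurableSpace α] [MeasurableSingletonClass α] [Countable α]
  [MeasurableSpace β] [MeasurableSingletonClass β] [Countable β]
  {f : Ω → α} {g : Ω → β}

theorem measure_eq_tsum_measure_inter_preimage_singleton (hg : Measurable g) (s : Set Ω) :
    μ s = ∑' b, μ (s ∩ g ⁻¹' {b}) := by
  simpa [Measure.map_apply hg, Measure.restrict_apply (hg (measurableSet_singleton _)),
    Set.inter_comm] using congrArg (· Set.univ) (Measure.map_eq_sum (μ.restrict s) g hg)

theorem indepFun_of_measure_inter_preimage_singleton [IsFiniteMeasure μ]
    (hf : Measurable f) (hg : Measurable g)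
    (h : ∀ a b, μ (f ⁻¹' {a} ∩ g ⁻¹' {b}) = μ (f ⁻¹' {a}) * μ (g ⁻¹' {b})) :
    IndepFun f g μ := by
  rw [indepFun_iff_map_prod_eq_prod_map_map hf.aemeasurable hg.aemeasurable,
    Measure.ext_iff_singleton]
  rintro ⟨a, b⟩
  rw [← Set.singleton_prod_singleton, Measure.prod_prod,
    Measure.map_apply (hf.prodMk hg)
      ((measurableSet_singleton a).prod (measurableSet_singleton b)),
    Measure.map_apply hf (measurableSet_singleton a),
    Measure.map_apply hg (measurableSet_singleton b), ← h]
  rfl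

theorem indepFun_of_measure_inter_preimage_singleton_eq_mul [IsProbabilityMeasure μ]
    (hf : Measurable f) (hg : Measurable g) (φ : α → ENNReal) (ψ : β → ENNReal)
    (h : ∀ a b, μ (f ⁻¹' {a} ∩ g ⁻¹' {b}) = φ a * ψ b) :
    IndepFun f g μ := by
  have hf_marg : ∀ a, μ (f ⁻¹' {a}) = φ a * ∑' b, ψ b := fun a => by
    rw [measure_eq_tsum_measure_inter_preimage_singleton hg, ← ENNReal.tsum_mul_left]
    exact tsum_congr (h a)
  have hg_marg : ∀ b, μ (g ⁻¹' {b}) = (∑' a, φ a) * ψ b := fun b => by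
    rw [measure_eq_tsum_measure_inter_preimage_singleton hf, ← ENNReal.tsum_mul_right]
    exact tsum_congr fun a => by rw [Set.inter_comm, h]
  have htotal : (∑' a, φ a) * ∑' b, ψ b = 1 := by
    rw [← measure_univ (μ := μ), measure_eq_tsum_measure_inter_preimage_singleton hf,
      ← ENNReal.tsum_mul_right]
    exact tsum_congr fun a => by rw [Set.univ_inter, hf_marg]
  refine indepFun_of_measure_inter_preimage_singleton hf hg fun a b => ?_
  calc μ (f ⁻¹' {a} ∩ g ⁻¹' {b}) = φ a * ψ b * ((∑' a, φ a) * ∑' b, ψ b) := by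
        rw [h, htotal, mul_one]
    _ = μ (f ⁻¹' {a}) * μ (g ⁻¹' {b}) := by rw [hf_marg, hg_marg]; ring

theorem indepFun_of_measure_inter_preimage_singleton_eq [IsProbabilityMeasure μ]
    (hf : Measurable f) (hg : Measurable g)
    (h : ∀ a b b', μ (f ⁻¹' {a} ∩ g ⁻¹' {b}) = μ (f ⁻¹' {a} ∩ g ⁻¹' {b'})) :
    IndepFun f g μ := by
  obtain ⟨ω⟩ := nonempty_of_isProbabilityMeasure μ
  exact indepFun_of_measure_inter_preimage_singleton_eq_mul hf hg
    (fun a => μ (f ⁻¹' {a} ∩ g ⁻¹' {g ω})) 1 fun a b => by rw [Pi.one_apply, mul_one, h a b]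

end DiscreteIndependence

theorem ae_of_measure_preimage_singleton_ne_zero {Ω α : Type*} [MeasurableSpace Ω]
    {μ : Measure Ω} [Countable α] {f : Ω → α} {P : α → Prop}
    (h : ∀ a, μ (f ⁻¹' {a}) ≠ 0 → P a) : ∀ᵐ ω ∂μ, P (f ω) := by
  rw [ae_iff]
  exact (measure_preimage_eq_zero_iff_of_countable (s := {a | ¬ P a}) (Set.to_countable _)).2
    fun a ha => not_not.1 (mt (h a) ha)

section JointLaw

variable {Ω α β : Type*} [MeasurableSpace Ω] {μ : Measure Ω}
  [MeasurableSpace β] [MeasurableSingletonClass β] [Fintype β]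
  {U V : Ω → ℤ} {X : Ω → α} {Y : Ω → β} {c : ℝ} {p : α → ℤ → ℝ} {q : β → ℤ → ℝ}

theorem measure_preimage_inter_eq_ofReal_mul_sum (hY : Measurable Y) (hc : 0 ≤ c)
    (hp : ∀ a k, 0 ≤ p a k) (hq : ∀ b l, 0 ≤ q b l)
    (hjoint : ∀ k l a b, μ (U ⁻¹' {k} ∩ V ⁻¹' {l} ∩ X ⁻¹' {a} ∩ Y ⁻¹' {b}) =
      ENNReal.ofReal (c * p a k * q b l)) (k l : ℤ) (a : α) :
    μ (U ⁻¹' {k} ∩ V ⁻¹' {l} ∩ X ⁻¹' {a}) = ENNReal.ofReal (c * p a k * ∑ b, q b l) := by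
  rw [measure_eq_tsum_measure_inter_preimage_singleton hY, tsum_fintype, Finset.mul_sum,
    ENNReal.ofReal_sum_of_nonneg fun b _ => mul_nonneg (mul_nonneg hc (hp a k)) (hq b l)]
  exact Finset.sum_congr rfl fun b _ => hjoint k l a b

theorem measure_add_preimage_inter_eq_ofReal_convZ (hU : Measurable U) (hY : Measurable Y)
    (hc : 0 ≤ c) (hp : ∀ a k, 0 ≤ p a k) (hq : ∀ b l, 0 ≤ q b l)
    (hp_sum : ∀ a, Summable (p a)) (hq_sum : ∀ b, Summable (q b))
    (hjoint : ∀ k l a b, μ (U ⁻¹' {k} ∩ V ⁻¹' {l} ∩ X ⁻¹' {a} ∩ Y ⁻¹' {b}) =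
      ENNReal.ofReal (c * p a k * q b l)) (m : ℤ) (a : α) :
    μ ((fun ω => U ω + V ω) ⁻¹' {m} ∩ X ⁻¹' {a}) =
      ENNReal.ofReal (c * convZ (p a) (fun l => ∑ b, q b l) m) := by
  have hslice : ∀ k, (fun ω => U ω + V ω) ⁻¹' {m} ∩ X ⁻¹' {a} ∩ U ⁻¹' {k} =
      U ⁻¹' {k} ∩ V ⁻¹' {m - k} ∩ X ⁻¹' {a} := by
    intro k
    ext ω
    simp only [Set.mem_inter_iff, Set.mem_preimage, Set.mem_singleton_iff]
    grind
  have hsummable : Summable fun k => c * (p a k * ∑ b, q b (m - k)) :=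
    (summable_mul_sub (hp_sum a) (summable_sum fun b _ => hq_sum b) m).mul_left c
  rw [measure_eq_tsum_measure_inter_preimage_singleton hU, convZ, ← tsum_mul_left,
    ENNReal.ofReal_tsum_of_nonneg (fun k => mul_nonneg hc
      (mul_nonneg (hp a k) (Finset.sum_nonneg fun b _ => hq b _))) hsummable]
  simp_rw [hslice, measure_preimage_inter_eq_ofReal_mul_sum hY hc hp hq hjoint, mul_assoc]

theorem indepFun_prodMk_of_measure_preimage_inter_eq
    [MeasurableSpace α] [MeasurableSingletonClass α] [Countable α] [IsProbabilityMeasure μ]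
    (hU : Measurable U) (hV : Measurable V) (hX : Measurable X) (hY : Measurable Y)
    (hc : 0 ≤ c) (hp : ∀ a k, 0 ≤ p a k)
    (hjoint : ∀ k l a b, μ (U ⁻¹' {k} ∩ V ⁻¹' {l} ∩ X ⁻¹' {a} ∩ Y ⁻¹' {b}) =
      ENNReal.ofReal (c * p a k * q b l)) :
    IndepFun (fun ω => (U ω, X ω)) (fun ω => (V ω, Y ω)) μ := by
  refine indepFun_of_measure_inter_preimage_singleton_eq_mul (hU.prodMk hX) (hV.prodMk hY)
    (fun x => ENNReal.ofReal (c * p x.2 x.1)) (fun y => ENNReal.ofReal (q y.2 y.1))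
    fun ⟨k, a⟩ ⟨l, b⟩ => ?_
  rw [← ENNReal.ofReal_mul (mul_nonneg hc (hp a k)), ← hjoint]
  congr 1
  ext
  simp only [Set.mem_inter_iff, Set.mem_preimage, Set.mem_singleton_iff, Prod.mk.injEq]
  tauto

theorem indepFun_add_of_charFunZ_mul_eq
    [MeasurableSpace α] [MeasurableSingletonClass α] [Countable α] [IsProbabilityMeasure μ]
    (hU : Measurable U) (hV : Measurable V) (hX : Measurable X) (hY : Measurable Y)
    (hc : 0 ≤ c) (hp : ∀ a k, 0 ≤ p a k) (hq : ∀ b l, 0 ≤ q b l)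
    (hp_sum : ∀ a, Summable (p a)) (hq_sum : ∀ b, Summable (q b))
    (hjoint : ∀ k l a b, μ (U ⁻¹' {k} ∩ V ⁻¹' {l} ∩ X ⁻¹' {a} ∩ Y ⁻¹' {b}) =
      ENNReal.ofReal (c * p a k * q b l))
    (hchar : ∀ a a' t, charFunZ (p a) t * charFunZ (fun l => ∑ b, q b l) t =
      charFunZ (p a') t * charFunZ (fun l => ∑ b, q b l) t) :
    IndepFun (fun ω => U ω + V ω) X μ :=
  indepFun_of_measure_inter_preimage_singleton_eq (hU.add hV) hX fun m a a' => by
    simp only [measure_add_preimage_inter_eq_ofReal_convZ hU hY hc hp hq hp_sum hq_sum hjoint,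
      convZ_eq_of_charFunZ_mul_eq (hp_sum a) (hp_sum a') (summable_sum fun b _ => hq_sum b)
        (hchar a a')]

end JointLaw

theorem sum_zmod_two {M : Type*} [AddCommMonoid M] (f : ZMod 2 → M) : ∑ a, f a = f 0 + f 1 :=
  Fin.sum_univ_two f

theorem intCast_eq_of_ne_zero_of_parity {p : ZMod 2 → ℤ → ℝ}
    (h0 : ∀ k, Odd k → p 0 k = 0) (h1 : ∀ k, Even k → p 1 k = 0) (a : ZMod 2) (k : ℤ)
    (hp : p a k ≠ 0) : (k : ZMod 2) = a := by
  fin_cases a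
  · exact ZMod.intCast_eq_zero_iff_even.2
      (not_not.1 fun hk => hp (h0 k (Int.not_even_iff_odd.1 hk)))
  · exact ZMod.intCast_eq_one_iff_odd.2
      (not_not.1 fun hk => hp (h1 k (Int.not_odd_iff_even.1 hk)))

theorem ae_add_eq_intCast_add {Ω R : Type*} [MeasurableSpace Ω] {μ : Measure Ω}
    [AddGroupWithOne R] [Countable R] {U V : Ω → ℤ} {X Y : Ω → R} {c : ℝ} {p q : R → ℤ → ℝ}
    (hp : ∀ a k, p a k ≠ 0 → (k : R) = a) (hq : ∀ b l, q b l ≠ 0 → (l : R) = b)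
    (hjoint : ∀ k l a b, μ (U ⁻¹' {k} ∩ V ⁻¹' {l} ∩ X ⁻¹' {a} ∩ Y ⁻¹' {b}) =
      ENNReal.ofReal (c * p a k * q b l)) :
    ∀ᵐ ω ∂μ, X ω + Y ω = ((U ω + V ω : ℤ) : R) := by
  refine ae_of_measure_preimage_singleton_ne_zero (f := fun ω => (U ω, V ω, X ω, Y ω))
    (P := fun z => z.2.2.1 + z.2.2.2 = ((z.1 + z.2.1 : ℤ) : R)) fun ⟨k, l, a, b⟩ hkl => ?_
  have hfiber : (fun ω => (U ω, V ω, X ω, Y ω)) ⁻¹' {(k, l, a, b)} =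
      U ⁻¹' {k} ∩ V ⁻¹' {l} ∩ X ⁻¹' {a} ∩ Y ⁻¹' {b} := by
    ext
    simp [and_assoc]
  rw [hfiber, hjoint, Ne, ENNReal.ofReal_eq_zero, not_le] at hkl
  have hpk : p a k ≠ 0 := fun h => by simp [h] at hkl
  have hql : q b l ≠ 0 := fun h => by simp [h] at hkl
  change a + b = ((k + l : ℤ) : R)
  rw [← hp a k hpk, ← hq b l hql, Int.cast_add]

theorem secure_xor_of_pmf_conditions_general
    {Ω : Type*} [MeasurableSpace Ω] (μ : Measure Ω) [IsProbabilityMeasure μ]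
    (X Y : Ω → ZMod 2) (U V : Ω → ℤ)
    (hX : Measurable X) (hY : Measurable Y) (hUm : Measurable U) (hVm : Measurable V)
    -- the conditional pmfs
    (pU pV : ZMod 2 → ℤ → ℝ)
    (hpUnn : ∀ a k, 0 ≤ pU a k) (hpVnn : ∀ a k, 0 ≤ pV a k)
    (hpUsum : ∀ a, HasSum (pU a) 1) (hpVsum : ∀ a, HasSum (pV a) 1)
    -- (i): support/parity conditions
    (hpar0 : ∀ k : ℤ, Odd k → pU 0 k = 0 ∧ pV 0 k = 0)
    (hpar1 : ∀ k : ℤ, Even k → pU 1 k = 0 ∧ pV 1 k = 0)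
    -- (ii): the characteristic-function conditions
    (hchar : ∀ a : ZMod 2, ∀ t : ℝ,
      ((1 / 2 : ℂ) * (charFunZ (pU 0) t + charFunZ (pU 1) t)) *
          ((1 / 2 : ℂ) * (charFunZ (pV 0) t + charFunZ (pV 1) t)) =
        charFunZ (pU a) t * ((1 / 2 : ℂ) * (charFunZ (pV 0) t + charFunZ (pV 1) t)) ∧
      ((1 / 2 : ℂ) * (charFunZ (pU 0) t + charFunZ (pU 1) t)) *
          ((1 / 2 : ℂ) * (charFunZ (pV 0) t + charFunZ (pV 1) t)) =
        ((1 / 2 : ℂ) * (charFunZ (pU 0) t + charFunZ (pU 1) t)) * charFunZ (pV a) t)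
    -- the joint pmf of (U, V, X, Y)
    (hjoint : ∀ (k l : ℤ) (a b : ZMod 2),
      μ (U ⁻¹' {k} ∩ V ⁻¹' {l} ∩ X ⁻¹' {a} ∩ Y ⁻¹' {b}) =
        ENNReal.ofReal ((1 / 4) * pU a k * pV b l)) :
    -- (S1)
    IndepFun (fun ω => (U ω, X ω)) (fun ω => (V ω, Y ω)) μ ∧
    -- (S2)
    IndepFun (fun ω => U ω + V ω) X μ ∧ IndepFun (fun ω => U ω + V ω) Y μ ∧
    -- (S3)
    (∀ᵐ ω ∂μ, X ω + Y ω = ((U ω + V ω : ℤ) : ZMod 2)) := by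
  have hU : ∀ a, Summable (pU a) := fun a => (hpUsum a).summable
  have hV : ∀ b, Summable (pV b) := fun b => (hpVsum b).summable
  have hjoint' : ∀ l k b a, μ (V ⁻¹' {l} ∩ U ⁻¹' {k} ∩ Y ⁻¹' {b} ∩ X ⁻¹' {a}) =
      ENNReal.ofReal (1 / 4 * pV b l * pU a k) := fun l k b a => by
    rw [← mul_right_comm, ← hjoint]
    congr 1
    ext
    simp only [Set.mem_inter_iff]
    tauto
  refine ⟨indepFun_prodMk_of_measure_preimage_inter_eq hUm hVm hX hY (by norm_num) hpUnn hjoint,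
    ?_, ?_, ae_add_eq_intCast_add
      (intCast_eq_of_ne_zero_of_parity (fun k hk => (hpar0 k hk).1) (fun k hk => (hpar1 k hk).1))
      (intCast_eq_of_ne_zero_of_parity (fun l hl => (hpar0 l hl).2) (fun l hl => (hpar1 l hl).2))
      hjoint⟩
  · refine indepFun_add_of_charFunZ_mul_eq hUm hVm hX hY (by norm_num) hpUnn hpVnn hU hV hjoint
      fun a a' t => ?_
    rw [charFunZ_sum _ (fun b _ => hV b), sum_zmod_two]
    linear_combination 2 * ((hchar a' t).1 - (hchar a t).1)
  · rw [show (fun ω => U ω + V ω) = fun ω => V ω + U ω from funext fun ω => add_comm _ _]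
    refine indepFun_add_of_charFunZ_mul_eq hVm hUm hY hX (by norm_num) hpVnn hpUnn hV hU hjoint'
      fun b b' t => ?_
    rw [charFunZ_sum _ (fun a _ => hU a), sum_zmod_two]
    linear_combination 2 * ((hchar b' t).2 - (hchar b t).2)

/-- Let `X, Y` be i.i.d. uniform `{0,1}`-valued random variables, and suppose
`p_{U|0}, p_{U|1}, p_{V|0}, p_{V|1}` are pmfs on `ℤ` such that (i) `p_{U|0}` and `p_{V|0}`
vanish on odd integers and `p_{U|1}` and `p_{V|1}` vanish on even integers, and (ii) with
`φ_U = (1/2)(φ_{U|0} + φ_{U|1})`, `φ_V = (1/2)(φ_{V|0} + φ_{V|1})`, one has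
`φ_U φ_V = φ_{U|a} φ_V = φ_U φ_{V|a}` for `a ∈ {0,1}`.  Then random variables `(U, V, X, Y)`
with joint pmf `p(k,l,a,b) = (1/4) p_{U|a}(k) p_{V|b}(l)` satisfy:
(S1) `(U,X) ⫫ (V,Y)`; (S2) `U+V ⫫ X` and `U+V ⫫ Y`; and
(S3) `X ⊕ Y` a.s. equals the parity of `U + V`. -/
theorem secure_xor_of_pmf_conditions
    {Ω : Type*} [MeasurableSpace Ω] (μ : Measure Ω) [IsProbabilityMeasure μ]
    (X Y : Ω → ZMod 2) (U V : Ω → ℤ)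
    (hX : Measurable X) (hY : Measurable Y) (hUm : Measurable U) (hVm : Measurable V)
    -- X and Y are i.i.d. uniform on {0,1}
    (hXY : IndepFun X Y μ)
    (hXunif : ∀ a : ZMod 2, μ (X ⁻¹' {a}) = 1 / 2)
    (hYunif : ∀ a : ZMod 2, μ (Y ⁻¹' {a}) = 1 / 2)
    -- the conditional pmfs
    (pU pV : ZMod 2 → ℤ → ℝ)
    (hpUnn : ∀ a k, 0 ≤ pU a k) (hpVnn : ∀ a k, 0 ≤ pV a k)
    (hpUsum : ∀ a, HasSum (pU a) 1) (hpVsum : ∀ a, HasSum (pV a) 1)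
    -- (i): support/parity conditions
    (hpar0 : ∀ k : ℤ, Odd k → pU 0 k = 0 ∧ pV 0 k = 0)
    (hpar1 : ∀ k : ℤ, Even k → pU 1 k = 0 ∧ pV 1 k = 0)
    -- (ii): the characteristic-function conditions
    (hchar : ∀ a : ZMod 2, ∀ t : ℝ,
      ((1 / 2 : ℂ) * (charFunZ (pU 0) t + charFunZ (pU 1) t)) *
          ((1 / 2 : ℂ) * (charFunZ (pV 0) t + charFunZ (pV 1) t)) =
        charFunZ (pU a) t * ((1 / 2 : ℂ) * (charFunZ (pV 0) t + charFunZ (pV 1) t)) ∧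
      ((1 / 2 : ℂ) * (charFunZ (pU 0) t + charFunZ (pU 1) t)) *
          ((1 / 2 : ℂ) * (charFunZ (pV 0) t + charFunZ (pV 1) t)) =
        ((1 / 2 : ℂ) * (charFunZ (pU 0) t + charFunZ (pU 1) t)) * charFunZ (pV a) t)
    -- the joint pmf of (U, V, X, Y)
    (hjoint : ∀ (k l : ℤ) (a b : ZMod 2),
      μ (U ⁻¹' {k} ∩ V ⁻¹' {l} ∩ X ⁻¹' {a} ∩ Y ⁻¹' {b}) =
        ENNReal.ofReal ((1 / 4) * pU a k * pV b l)) :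
    -- (S1)
    IndepFun (fun ω => (U ω, X ω)) (fun ω => (V ω, Y ω)) μ ∧
    -- (S2)
    IndepFun (fun ω => U ω + V ω) X μ ∧ IndepFun (fun ω => U ω + V ω) Y μ ∧
    -- (S3)
    (∀ᵐ ω ∂μ, X ω + Y ω = ((U ω + V ω : ℤ) : ZMod 2)) :=
  secure_xor_of_pmf_conditions_general μ X Y U V hX hY hUm hVm pU pV hpUnn hpVnn hpUsum hpVsum hpar0
    hpar1 hchar hjoint
end

section
/- Let f: ℝ → ℝ be defined by f(0) = 1/(2π) and f(x) = (1 − cos x)/(π x²) for x ≠ 0. Then ∫_{-∞}^{∞} f(y)² dy = 1/(3π). -/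
open Real

/-!
For `x > 0` write `1 / x ^ 4 = (1 / 3!) ∫₀^∞ t³ e^{-tx} dt`. By Fubini, `∫₀^∞ (1 - cos x)² / x⁴ dx`
becomes `(1 / 6) ∫₀^∞ t³ L(t) dt`, where `L` is the Laplace transform of `(1 - cos x)²`. Since
`(1 - cos x)² = 3/2 - 2 cos x + (cos 2x)/2` and `cos (a x)` has Laplace transform `t / (t² + a²)`,
`L(t) = 6 / (t (t² + 1) (t² + 4))`, so `t³ L(t) = 8 / (t² + 4) - 2 / (t² + 1)` integrates to `π`.
Hence `∫₀^∞ (1 - cos x)² / x⁴ dx = π / 6`, and by evenness `∫ f² = 2 (π / 6) / π² = 1 / (3π)`.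
-/

open MeasureTheory Set
open scoped Nat

theorem integral_pow_mul_exp_neg_mul_Ioi (n : ℕ) {r : ℝ} (hr : 0 < r) :
    ∫ t in Ioi (0 : ℝ), t ^ n * exp (-(r * t)) = n ! / r ^ (n + 1) := by
  have h := integral_rpow_mul_exp_neg_mul_Ioi (a := n + 1) (by positivity) hr
  rw [Real.Gamma_nat_eq_factorial, ← Nat.cast_succ, Real.rpow_natCast, div_pow, one_pow] at h
  rw [div_eq_inv_mul, ← one_div, ← h]
  refine setIntegral_congr_fun measurableSet_Ioi fun t _ => ?_
  simp [← Real.rpow_natCast]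

theorem integral_div_pow_succ_eq_integral_laplace {g : ℝ → ℝ} (n : ℕ) (hgm : Measurable g)
    (hg : ∀ x > 0, 0 ≤ g x)
    (hL : ∀ t > 0, IntegrableOn (fun x => exp (-(t * x)) * g x) (Ioi 0))
    (hLi : IntegrableOn (fun t => t ^ n * ∫ x in Ioi 0, exp (-(t * x)) * g x) (Ioi 0)) :
    ∫ x in Ioi 0, g x / x ^ (n + 1) =
      (∫ t in Ioi 0, t ^ n * ∫ x in Ioi 0, exp (-(t * x)) * g x) / n ! := by
  set K : ℝ → ℝ → ℝ := fun x t => t ^ n * (exp (-(t * x)) * g x) with hK_def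
  have hK : Integrable (Function.uncurry K)
      ((volume.restrict (Ioi 0)).prod (volume.restrict (Ioi 0))) := by
    rw [integrable_prod_iff' (by fun_prop)]
    constructor
    · filter_upwards [ae_restrict_mem measurableSet_Ioi] with t ht
      exact (hL t ht).const_mul (t ^ n)
    · refine hLi.congr ?_
      filter_upwards [ae_restrict_mem measurableSet_Ioi] with t (ht : 0 < t)
      rw [← integral_const_mul]
      refine setIntegral_congr_fun measurableSet_Ioi fun x (hx : 0 < x) => ?_
      simp only [Function.uncurry_apply_pair, hK_def, Real.norm_eq_abs]
      rw [abs_of_nonneg (by have := hg x hx; positivity)]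
  calc ∫ x in Ioi 0, g x / x ^ (n + 1) = ∫ x in Ioi 0, (∫ t in Ioi 0, K x t) / n ! := by
        refine setIntegral_congr_fun measurableSet_Ioi fun x (hx : 0 < x) => ?_
        simp only [hK_def, ← mul_assoc]
        simp_rw [mul_comm _ x]
        rw [integral_mul_const, integral_pow_mul_exp_neg_mul_Ioi n hx]
        field_simp
    _ = (∫ t in Ioi 0, ∫ x in Ioi 0, K x t) / n ! := by
        rw [integral_div, integral_integral_swap hK]
    _ = _ := by simp only [hK_def, integral_const_mul]

theorem exp_neg_mul_mul_cos_eq_re (b a x : ℝ) :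
    exp (-(b * x)) * cos (a * x) = RCLike.re (Complex.exp ((-b + a * Complex.I) * x)) := by
  rw [RCLike.re_to_complex, Complex.exp_re]
  simp

theorem integrableOn_exp_neg_mul_mul_cos_Ioi {b : ℝ} (hb : 0 < b) (a : ℝ) :
    IntegrableOn (fun x : ℝ => exp (-(b * x)) * cos (a * x)) (Ioi 0) := by
  simp_rw [exp_neg_mul_mul_cos_eq_re]
  exact (integrableOn_exp_mul_complex_Ioi (a := -b + a * Complex.I) (by simpa using hb) 0).re

theorem integral_exp_neg_mul_mul_cos_Ioi {b : ℝ} (hb : 0 < b) (a : ℝ) :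
    ∫ x in Ioi (0 : ℝ), exp (-(b * x)) * cos (a * x) = b / (b ^ 2 + a ^ 2) := by
  have hre : (-b + a * Complex.I).re < 0 := by simpa using hb
  simp_rw [exp_neg_mul_mul_cos_eq_re]
  rw [integral_re (integrableOn_exp_mul_complex_Ioi hre 0), integral_exp_mul_complex_Ioi hre]
  simp [Complex.div_re, Complex.normSq_apply, sq]

theorem inv_sq_add_sq_eq {c : ℝ} (hc : c ≠ 0) (t : ℝ) :
    (t ^ 2 + c ^ 2)⁻¹ = (c ^ 2)⁻¹ * (1 + (c⁻¹ * t) ^ 2)⁻¹ := by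
  field_simp
  ring

theorem integrableOn_inv_sq_add_sq_Ioi {c : ℝ} (hc : 0 < c) :
    IntegrableOn (fun t : ℝ => (t ^ 2 + c ^ 2)⁻¹) (Ioi 0) := by
  simp_rw [inv_sq_add_sq_eq hc.ne']
  refine Integrable.const_mul ?_ _
  exact (integrableOn_Ioi_comp_mul_left_iff (fun x : ℝ => (1 + x ^ 2)⁻¹) 0 (inv_pos.2 hc)).2
    integrable_inv_one_add_sq.integrableOn

theorem integral_inv_sq_add_sq_Ioi {c : ℝ} (hc : 0 < c) :
    ∫ t in Ioi (0 : ℝ), (t ^ 2 + c ^ 2)⁻¹ = π / (2 * c) := by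
  simp_rw [inv_sq_add_sq_eq hc.ne']
  rw [integral_const_mul, integral_comp_mul_left_Ioi (fun x : ℝ => (1 + x ^ 2)⁻¹) 0 (inv_pos.2 hc),
    mul_zero, integral_Ioi_inv_one_add_sq, arctan_zero, smul_eq_mul]
  field_simp
  ring

theorem exp_neg_mul_mul_one_sub_cos_sq (t x : ℝ) :
    exp (-(t * x)) * (1 - cos x) ^ 2 =
      3 / 2 * (exp (-(t * x)) * cos (0 * x)) - 2 * (exp (-(t * x)) * cos (1 * x)) +
        1 / 2 * (exp (-(t * x)) * cos (2 * x)) := by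
  rw [zero_mul, one_mul, cos_zero, cos_two_mul]
  ring

theorem integrableOn_exp_neg_mul_mul_one_sub_cos_sq_Ioi {t : ℝ} (ht : 0 < t) :
    IntegrableOn (fun x => exp (-(t * x)) * (1 - cos x) ^ 2) (Ioi 0) := by
  simp_rw [exp_neg_mul_mul_one_sub_cos_sq]
  exact ((((integrableOn_exp_neg_mul_mul_cos_Ioi ht 0).const_mul _).sub
    ((integrableOn_exp_neg_mul_mul_cos_Ioi ht 1).const_mul _)).add
    ((integrableOn_exp_neg_mul_mul_cos_Ioi ht 2).const_mul _))

theorem integral_exp_neg_mul_mul_one_sub_cos_sq_Ioi {t : ℝ} (ht : 0 < t) :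
    ∫ x in Ioi (0 : ℝ), exp (-(t * x)) * (1 - cos x) ^ 2 =
      6 / (t * (t ^ 2 + 1) * (t ^ 2 + 4)) := by
  have hi (c a : ℝ) := (integrableOn_exp_neg_mul_mul_cos_Ioi ht a).const_mul c
  have hi01 : IntegrableOn (fun x => 3 / 2 * (exp (-(t * x)) * cos (0 * x)) -
      2 * (exp (-(t * x)) * cos (1 * x))) (Ioi 0) := (hi _ 0).sub (hi _ 1)
  simp_rw [exp_neg_mul_mul_one_sub_cos_sq]
  rw [integral_add hi01 (hi _ 2), integral_sub (hi _ 0) (hi _ 1), integral_const_mul,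
    integral_const_mul, integral_const_mul, integral_exp_neg_mul_mul_cos_Ioi ht,
    integral_exp_neg_mul_mul_cos_Ioi ht, integral_exp_neg_mul_mul_cos_Ioi ht]
  field_simp
  ring

theorem integral_one_sub_cos_sq_div_pow_four_Ioi :
    ∫ x in Ioi (0 : ℝ), (1 - cos x) ^ 2 / x ^ 4 = π / 6 := by
  have hrat : EqOn (fun t => t ^ 3 * ∫ x in Ioi 0, exp (-(t * x)) * (1 - cos x) ^ 2)
      (fun t => 8 * (t ^ 2 + 2 ^ 2)⁻¹ - 2 * (t ^ 2 + 1 ^ 2)⁻¹) (Ioi 0) := fun t (ht : 0 < t) => by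
    simp only [integral_exp_neg_mul_mul_one_sub_cos_sq_Ioi ht]
    field_simp
    ring
  have hi1 := (integrableOn_inv_sq_add_sq_Ioi one_pos).const_mul 2
  have hi2 := (integrableOn_inv_sq_add_sq_Ioi two_pos).const_mul 8
  rw [integral_div_pow_succ_eq_integral_laplace 3 (by fun_prop) (fun x _ => sq_nonneg _)
      (fun t ht => integrableOn_exp_neg_mul_mul_one_sub_cos_sq_Ioi ht)
      (IntegrableOn.congr_fun (hi2.sub hi1) hrat.symm measurableSet_Ioi),
    setIntegral_congr_fun measurableSet_Ioi hrat, integral_sub hi2 hi1, integral_const_mul,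
    integral_const_mul, integral_inv_sq_add_sq_Ioi one_pos, integral_inv_sq_add_sq_Ioi two_pos]
  norm_num [Nat.factorial]
  ring

theorem fejer_density_squared_integral_general
    (f : ℝ → ℝ)
    (hf : ∀ x : ℝ, x ≠ 0 → f x = (1 - cos x) / (π * x ^ 2)) :
    ∫ y : ℝ, (f y) ^ 2 = 1 / (3 * π) := by
  have hae : (fun y => f y ^ 2) =ᵐ[volume] fun y => (π ^ 2)⁻¹ * ((1 - cos |y|) ^ 2 / |y| ^ 4) := by
    filter_upwards [Measure.ae_ne volume 0] with y hy
    rw [hf y hy, cos_abs, pow_abs, abs_of_nonneg (by positivity : (0 : ℝ) ≤ y ^ 4)]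
    field_simp
  rw [integral_congr_ae hae, integral_const_mul,
    integral_comp_abs (f := fun y => (1 - cos y) ^ 2 / y ^ 4),
    integral_one_sub_cos_sq_div_pow_four_Ioi]
  field_simp
  ring

/-- For the Fejér-type density `f(0) = 1/(2π)`,
`f(x) = (1 − cos x)/(π x²)` for `x ≠ 0`, one has `∫ f(y)² dy = 1/(3π)`. -/
theorem fejer_density_squared_integral
    (f : ℝ → ℝ) (hf0 : f 0 = 1 / (2 * π))
    (hf : ∀ x : ℝ, x ≠ 0 → f x = (1 - cos x) / (π * x ^ 2)) :
    ∫ y : ℝ, (f y) ^ 2 = 1 / (3 * π) :=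
  fejer_density_squared_integral_general f hf
end

section
/- Let Λ₀ ⊆ Λ be full-rank nested lattices in ℝ^d with Λ₀ of index N in Λ, with Fourier dual lattices Λ̂₀ = 2πΛ₀* and Λ̂ = 2πΛ* (so Λ̂ ⊆ Λ̂₀). Let ψ: ℝ^d → ℝ≥0 be a characteristic function with ψ(t) = 0 for t ∉ 𝒱(Λ̂₀). Write each coset of Λ₀ in Λ as Λ_j = u_j + Λ₀ with u_j ∈ Λ, and define φ_j(ζ) = Σ_{n∈Λ̂₀} ψ(ζ + n) e^{−i⟨n, u_j⟩} for j = 0, …, N−1, and φ(ζ) = Σ_{n∈Λ̂} ψ(ζ + n). Then (i) φ² = φ·φ_j pointwise for every j, and (ii) φ = (1/N) Σ_{j=0}^{N−1} φ_j. -/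
/-!
Since `ψ` vanishes outside the open Voronoi cell of `Λ̂₀`, for each `ζ` at most one `n₀ ∈ Λ̂₀`
has `ψ(ζ + n₀) ≠ 0` (two such would differ by a nonzero point of `Λ̂₀`, contradicting the strict
Voronoi inequalities). Hence `φ_j(ζ) = ψ(ζ + n₀) e^{-i⟨n₀, u_j⟩}` and `φ(ζ) = ψ(ζ + n₀)` or `0`
according as `n₀ ∈ Λ̂` or not. The character `x ↦ e^{-i⟨n₀, x⟩}` is trivial on `Λ₀`, and trivial
on `Λ` exactly when `n₀ ∈ Λ̂`; otherwise its sum over coset representatives vanishes, because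
translating by an `x ∈ Λ` with nontrivial value permutes the cosets. Both identities follow.
-/

open MeasureTheory Real RealInnerProductSpace

/-- The full-rank lattice in `ℝ^d` with generator matrix `A`, i.e. `A^T ℤ^d`. -/
def latticeOfGen {d : ℕ} (A : Matrix (Fin d) (Fin d) ℝ) : Set (EuclideanSpace ℝ (Fin d)) :=
  {x | ∃ z : Fin d → ℤ, ∀ i, x i = A.transpose.mulVec (fun j => (z j : ℝ)) i}

/-- The dual lattice `L* = {x : ⟨x, z⟩ ∈ ℤ for all z ∈ L}`. -/
def dualLatticeSet {d : ℕ} (L : Set (EuclideanSpace ℝ (Fin d))) :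
    Set (EuclideanSpace ℝ (Fin d)) :=
  {x | ∀ z ∈ L, ∃ n : ℤ, ⟪x, z⟫ = (n : ℝ)}

/-- The Fourier dual lattice `L̂ = 2π L*`. -/
noncomputable def fourierDualSet {d : ℕ} (L : Set (EuclideanSpace ℝ (Fin d))) :
    Set (EuclideanSpace ℝ (Fin d)) :=
  {x | ∃ y ∈ dualLatticeSet L, x = (2 * π) • y}

/-- The interior `𝒱(L)` of the Voronoi region of `L` around `0`. -/
def voronoiInterior {d : ℕ} (L : Set (EuclideanSpace ℝ (Fin d))) :
    Set (EuclideanSpace ℝ (Fin d)) :=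
  {x | ∀ z ∈ L, z ≠ 0 → ‖x‖ < ‖x - z‖}

/-- `φ_j(ζ) = Σ_{n ∈ Λ̂₀} ψ(ζ + n) e^{−i⟨n, u_j⟩}`, the `u_j`-twisted periodization of `ψ`
over the Fourier dual lattice `Λ̂₀`. -/
noncomputable def twistedPeriodization {d : ℕ} (L0hat : Set (EuclideanSpace ℝ (Fin d)))
    (ψ : EuclideanSpace ℝ (Fin d) → ℝ) (uj ζ : EuclideanSpace ℝ (Fin d)) : ℂ :=
  ∑' n : ↥L0hat, (ψ (ζ + n) : ℂ) *
    Complex.exp (-(Complex.I * (⟪(n : EuclideanSpace ℝ (Fin d)), uj⟫ : ℝ)))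

theorem tsum_subtype_eq_indicator_of_forall_ne {α M : Type*} [AddCommMonoid M]
    [TopologicalSpace M] {s : Set α} {g : α → M} {a : α} (h : ∀ n ∈ s, n ≠ a → g n = 0) :
    ∑' n : s, g n = s.indicator g a := by
  rw [tsum_subtype, tsum_eq_single a]
  intro n hn
  by_cases hns : n ∈ s
  · simp [hns, h n hns hn]
  · simp [hns]

theorem AddChar.sum_cosetReps_eq_zero {G R ι : Type*} [AddCommGroup G] [CommRing R]
    [IsDomain R] [Fintype ι] {H K : AddSubgroup G} {u : ι → G} (hu : ∀ j, u j ∈ K)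
    (hcover : ∀ x ∈ K, ∃ j, x - u j ∈ H) (hdisj : ∀ i j, i ≠ j → u i - u j ∉ H)
    (χ : AddChar G R) (hχH : ∀ h ∈ H, χ h = 1) {x : G} (hxK : x ∈ K) (hχx : χ x ≠ 1) :
    ∑ j, χ (u j) = 0 := by
  choose σ hσ using fun j => hcover (u j + x) (K.add_mem (hu j) hxK)
  have hσ_inj : σ.Injective := by
    intro i j hij
    by_contra hne
    refine hdisj i j hne ?_
    convert H.sub_mem (hσ i) (hσ j) using 1
    rw [hij]
    abel
  have hχσ : ∀ j, χ (u (σ j)) = χ (u j) * χ x := by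
    intro j
    rw [← map_add_eq_mul, ← mul_one (χ (u (σ j))), ← hχH _ (hσ j), ← map_add_eq_mul,
      add_sub_cancel]
  have hfix : (∑ j, χ (u j)) * χ x = ∑ j, χ (u j) :=
    calc (∑ j, χ (u j)) * χ x = ∑ j, χ (u (σ j)) := by
          rw [Finset.sum_mul]
          exact Finset.sum_congr rfl fun j _ => (hχσ j).symm
      _ = ∑ j, χ (u j) := (Finite.injective_iff_bijective.1 hσ_inj).sum_comp (χ ∘ u)
  have : (∑ j, χ (u j)) * (χ x - 1) = 0 := by rw [mul_sub, mul_one, hfix, sub_self]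
  exact (mul_eq_zero.1 this).resolve_right (sub_ne_zero.2 hχx)

theorem Complex.exp_neg_I_mul_ofReal_eq_one_iff (r : ℝ) :
    Complex.exp (-(Complex.I * r)) = 1 ↔ ∃ k : ℤ, r = k * (2 * π) := by
  rw [Complex.exp_eq_one_iff]
  constructor
  · rintro ⟨k, hk⟩
    refine ⟨-k, ?_⟩
    have : -r = k * (2 * π) := by simpa using congrArg Complex.im hk
    push_cast
    linarith
  · rintro ⟨k, rfl⟩
    exact ⟨-k, by push_cast; ring⟩

noncomputable def innerExpChar {E : Type*} [NormedAddCommGroup E] [InnerProductSpace ℝ E]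
    (n : E) : AddChar E ℂ where
  toFun x := Complex.exp (-(Complex.I * (⟪n, x⟫ : ℝ)))
  map_zero_eq_one' := by simp
  map_add_eq_mul' x y := by
    rw [← Complex.exp_add, inner_add_right]
    push_cast
    ring_nf

section

variable {d : ℕ}

def latticeAddSubgroup (A : Matrix (Fin d) (Fin d) ℝ) :
    AddSubgroup (EuclideanSpace ℝ (Fin d)) where
  carrier := latticeOfGen A
  zero_mem' := ⟨0, fun i => by simp [← Pi.zero_def]⟩
  add_mem' := by
    rintro x y ⟨z, hz⟩ ⟨w, hw⟩
    refine ⟨z + w, fun i => ?_⟩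
    rw [PiLp.add_apply, hz, hw, ← Pi.add_apply (Matrix.mulVec _ _), ← Matrix.mulVec_add]
    simp only [Pi.add_apply, Int.cast_add]
    rfl
  neg_mem' := by
    rintro x ⟨z, hz⟩
    refine ⟨-z, fun i => ?_⟩
    rw [PiLp.neg_apply, hz, ← Pi.neg_apply (Matrix.mulVec _ _), ← Matrix.mulVec_neg]
    simp only [Pi.neg_apply, Int.cast_neg]
    rfl

theorem mem_fourierDualSet_iff {L : Set (EuclideanSpace ℝ (Fin d))}
    {n : EuclideanSpace ℝ (Fin d)} :
    n ∈ fourierDualSet L ↔ ∀ x ∈ L, ∃ k : ℤ, ⟪n, x⟫ = k * (2 * π) := by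
  constructor
  · rintro ⟨y, hy, rfl⟩ x hx
    obtain ⟨k, hk⟩ := hy x hx
    exact ⟨k, by rw [real_inner_smul_left, hk, mul_comm]⟩
  · intro h
    refine ⟨(2 * π)⁻¹ • n, fun x hx => ?_, (smul_inv_smul₀ (by positivity) n).symm⟩
    obtain ⟨k, hk⟩ := h x hx
    exact ⟨k, by rw [real_inner_smul_left, hk]; field_simp⟩

theorem zero_mem_fourierDualSet (L : Set (EuclideanSpace ℝ (Fin d))) :
    0 ∈ fourierDualSet L :=
  mem_fourierDualSet_iff.2 fun _ _ => ⟨0, by simp⟩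

theorem sub_mem_fourierDualSet {L : Set (EuclideanSpace ℝ (Fin d))}
    {n m : EuclideanSpace ℝ (Fin d)} (hn : n ∈ fourierDualSet L) (hm : m ∈ fourierDualSet L) :
    n - m ∈ fourierDualSet L := by
  rw [mem_fourierDualSet_iff] at *
  intro x hx
  obtain ⟨k, hk⟩ := hn x hx
  obtain ⟨l, hl⟩ := hm x hx
  exact ⟨k - l, by rw [inner_sub_left, hk, hl]; push_cast; ring⟩

theorem fourierDualSet_anti {L L' : Set (EuclideanSpace ℝ (Fin d))} (h : L ⊆ L') :
    fourierDualSet L' ⊆ fourierDualSet L := by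
  simp only [Set.subset_def, mem_fourierDualSet_iff]
  exact fun n hn x hx => hn x (h hx)

theorem eq_of_mem_voronoiInterior {Γ : Set (EuclideanSpace ℝ (Fin d))}
    {x y : EuclideanSpace ℝ (Fin d)} (hx : x ∈ voronoiInterior Γ) (hy : y ∈ voronoiInterior Γ)
    (hxy : x - y ∈ Γ) (hyx : y - x ∈ Γ) : x = y := by
  by_contra hne
  have h₁ := hx (x - y) hxy (sub_ne_zero.2 hne)
  have h₂ := hy (y - x) hyx (sub_ne_zero.2 (Ne.symm hne))
  rw [sub_sub_cancel] at h₁ h₂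
  exact h₁.asymm h₂

theorem exists_mem_fourierDualSet_forall_ne_eq_zero {L : Set (EuclideanSpace ℝ (Fin d))}
    {ψ : EuclideanSpace ℝ (Fin d) → ℝ}
    (hsupp : ∀ t, t ∉ voronoiInterior (fourierDualSet L) → ψ t = 0)
    (ζ : EuclideanSpace ℝ (Fin d)) :
    ∃ n₀ ∈ fourierDualSet L, ∀ n ∈ fourierDualSet L, n ≠ n₀ → ψ (ζ + n) = 0 := by
  by_cases h : ∃ n₀ ∈ fourierDualSet L, ψ (ζ + n₀) ≠ 0
  · obtain ⟨n₀, hn₀, hψn₀⟩ := h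
    refine ⟨n₀, hn₀, fun n hn hne => ?_⟩
    by_contra hψn
    refine hne (add_left_cancel (eq_of_mem_voronoiInterior (not_imp_comm.1 (hsupp _) hψn)
      (not_imp_comm.1 (hsupp _) hψn₀) ?_ ?_))
    · simpa using sub_mem_fourierDualSet hn hn₀
    · simpa using sub_mem_fourierDualSet hn₀ hn
  · push Not at h
    exact ⟨0, zero_mem_fourierDualSet L, fun n hn _ => h n hn⟩

theorem forall_innerExpChar_eq_one_iff {L : Set (EuclideanSpace ℝ (Fin d))}
    {n : EuclideanSpace ℝ (Fin d)} :
    (∀ x ∈ L, innerExpChar n x = 1) ↔ n ∈ fourierDualSet L := by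
  simp only [mem_fourierDualSet_iff, innerExpChar, AddChar.coe_mk,
    Complex.exp_neg_I_mul_ofReal_eq_one_iff]

open Classical in
theorem sum_innerExpChar_cosetReps {A0 F : Matrix (Fin d) (Fin d) ℝ} {ι : Type*}
    [Fintype ι] {u : ι → EuclideanSpace ℝ (Fin d)} (hu : ∀ j, u j ∈ latticeOfGen F)
    (hcover : ∀ x ∈ latticeOfGen F, ∃ j, x - u j ∈ latticeOfGen A0)
    (hdisj : ∀ i j, i ≠ j → u i - u j ∉ latticeOfGen A0)
    {n : EuclideanSpace ℝ (Fin d)} (hn : n ∈ fourierDualSet (latticeOfGen A0)) :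
    ∑ j, innerExpChar n (u j) =
      if n ∈ fourierDualSet (latticeOfGen F) then (Fintype.card ι : ℂ) else 0 := by
  split_ifs with hnF
  · simp [forall_innerExpChar_eq_one_iff.2 hnF _ (hu _)]
  · obtain ⟨x, hxF, hχx⟩ : ∃ x ∈ latticeOfGen F, innerExpChar n x ≠ 1 := by
      simpa using mt forall_innerExpChar_eq_one_iff.1 hnF
    exact AddChar.sum_cosetReps_eq_zero (H := latticeAddSubgroup A0) (K := latticeAddSubgroup F)
      hu hcover hdisj _ (forall_innerExpChar_eq_one_iff.2 hn) hxF hχx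

theorem twistedPeriodization_eq_of_forall_ne {L : Set (EuclideanSpace ℝ (Fin d))}
    {ψ : EuclideanSpace ℝ (Fin d) → ℝ} {ζ n₀ : EuclideanSpace ℝ (Fin d)} (hn₀ : n₀ ∈ L)
    (h : ∀ n ∈ L, n ≠ n₀ → ψ (ζ + n) = 0) (v : EuclideanSpace ℝ (Fin d)) :
    twistedPeriodization L ψ v ζ = ψ (ζ + n₀) * innerExpChar n₀ v := by
  have := tsum_subtype_eq_indicator_of_forall_ne (s := L) (a := n₀)
    (g := fun n => (ψ (ζ + n) : ℂ) * innerExpChar n v) fun n hn hne => by simp [h n hn hne]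
  exact this.trans (Set.indicator_of_mem hn₀ _)

end

theorem periodized_lattice_charfun_identities_general
    {d : ℕ}
    -- the nested lattices: coarse Λ₀ with generator matrix A0, fine Λ with generator F
    (A0 F : Matrix (Fin d) (Fin d) ℝ)
    (hnested : latticeOfGen A0 ⊆ latticeOfGen F)
    -- the N cosets of Λ₀ in Λ, with representatives u j ∈ Λ
    (N : ℕ) (hN : 0 < N) (u : Fin N → EuclideanSpace ℝ (Fin d))
    (hu : ∀ j, u j ∈ latticeOfGen F)
    (hcover : ∀ x ∈ latticeOfGen F, ∃ j, x - u j ∈ latticeOfGen A0)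
    (hdisj : ∀ i j : Fin N, i ≠ j → u i - u j ∉ latticeOfGen A0)
    -- ψ ≥ 0 is the characteristic function of a density f, supported within 𝒱(Λ̂₀)
    (ψ : EuclideanSpace ℝ (Fin d) → ℝ)
    (hsupp : ∀ t, t ∉ voronoiInterior (fourierDualSet (latticeOfGen A0)) → ψ t = 0) :
    -- (i) φ² = φ·φ_j for every j
    (∀ (j : Fin N) (ζ : EuclideanSpace ℝ (Fin d)),
      (∑' n : ↥(fourierDualSet (latticeOfGen F)),
          ((ψ (ζ + n) : ℝ) : ℂ)) ^ 2 =
        (∑' n : ↥(fourierDualSet (latticeOfGen F)), ((ψ (ζ + n) : ℝ) : ℂ)) *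
          twistedPeriodization (fourierDualSet (latticeOfGen A0)) ψ (u j) ζ) ∧
    -- (ii) φ = (1/N) Σ_j φ_j
    (∀ ζ : EuclideanSpace ℝ (Fin d),
      (∑' n : ↥(fourierDualSet (latticeOfGen F)), ((ψ (ζ + n) : ℝ) : ℂ)) =
        (1 / (N : ℂ)) * ∑ j : Fin N,
          twistedPeriodization (fourierDualSet (latticeOfGen A0)) ψ (u j) ζ) := by
  classical
  have key : ∀ ζ, ∃ n₀ ∈ fourierDualSet (latticeOfGen A0),
      (∑' n : ↥(fourierDualSet (latticeOfGen F)), ((ψ (ζ + n) : ℝ) : ℂ)) =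
        (if n₀ ∈ fourierDualSet (latticeOfGen F) then (ψ (ζ + n₀) : ℂ) else 0) ∧
      ∀ v, twistedPeriodization (fourierDualSet (latticeOfGen A0)) ψ v ζ =
        ψ (ζ + n₀) * innerExpChar n₀ v := by
    intro ζ
    obtain ⟨n₀, hn₀, hzero⟩ := exists_mem_fourierDualSet_forall_ne_eq_zero hsupp ζ
    refine ⟨n₀, hn₀, ?_, twistedPeriodization_eq_of_forall_ne hn₀ hzero⟩
    refine (tsum_subtype_eq_indicator_of_forall_ne (g := fun n => (ψ (ζ + n) : ℂ))
      fun n hn hne => ?_).trans (Set.indicator_apply _ _ _)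
    simp [hzero n (fourierDualSet_anti hnested hn) hne]
  refine ⟨fun j ζ => ?_, fun ζ => ?_⟩ <;> obtain ⟨n₀, hn₀, hφ, hφj⟩ := key ζ
  · rw [hφ, hφj]
    split_ifs with hn₀F
    · rw [forall_innerExpChar_eq_one_iff.2 hn₀F _ (hu j)]
      ring
    · ring
  · rw [hφ, Finset.sum_congr rfl fun j _ => hφj (u j), ← Finset.mul_sum,
      sum_innerExpChar_cosetReps hu hcover hdisj hn₀, Fintype.card_fin]
    have : (N : ℂ) ≠ 0 := by exact_mod_cast hN.ne'
    split_ifs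
    · field_simp
    · simp

/-- Let `Λ₀ ⊆ Λ` be full-rank nested lattices in `ℝ^d` with `Λ₀` of index
`N` in `Λ` and Fourier duals `Λ̂ ⊆ Λ̂₀`.  Let `ψ ≥ 0` be a characteristic function vanishing
outside `𝒱(Λ̂₀)`.  Writing each coset as `Λ_j = u_j + Λ₀` with `u_j ∈ Λ`, define
`φ_j(ζ) = Σ_{n ∈ Λ̂₀} ψ(ζ+n) e^{−i⟨n,u_j⟩}` and `φ(ζ) = Σ_{n ∈ Λ̂} ψ(ζ+n)`.  Then
(i) `φ² = φ·φ_j` pointwise for every `j`, and (ii) `φ = (1/N) Σ_j φ_j`. -/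
theorem periodized_lattice_charfun_identities
    {d : ℕ}
    -- the nested lattices: coarse Λ₀ with generator matrix A0, fine Λ with generator F
    (A0 F : Matrix (Fin d) (Fin d) ℝ) (hA0 : A0.det ≠ 0) (hF : F.det ≠ 0)
    (hnested : latticeOfGen A0 ⊆ latticeOfGen F)
    -- the N cosets of Λ₀ in Λ, with representatives u j ∈ Λ
    (N : ℕ) (hN : 0 < N) (u : Fin N → EuclideanSpace ℝ (Fin d))
    (hu : ∀ j, u j ∈ latticeOfGen F)
    (hcover : ∀ x ∈ latticeOfGen F, ∃ j, x - u j ∈ latticeOfGen A0)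
    (hdisj : ∀ i j : Fin N, i ≠ j → u i - u j ∉ latticeOfGen A0)
    -- ψ ≥ 0 is the characteristic function of a density f, supported within 𝒱(Λ̂₀)
    (f : EuclideanSpace ℝ (Fin d) → ℝ) (ψ : EuclideanSpace ℝ (Fin d) → ℝ)
    (hf_nn : ∀ x, 0 ≤ f x) (hf_int : ∫ x : EuclideanSpace ℝ (Fin d), f x = 1)
    (hψ : ∀ t, (ψ t : ℂ) = ∫ x : EuclideanSpace ℝ (Fin d),
      (f x : ℂ) * Complex.exp (Complex.I * (⟪t, x⟫ : ℝ)))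
    (hψ_nn : ∀ t, 0 ≤ ψ t)
    (hsupp : ∀ t, t ∉ voronoiInterior (fourierDualSet (latticeOfGen A0)) → ψ t = 0) :
    -- (i) φ² = φ·φ_j for every j
    (∀ (j : Fin N) (ζ : EuclideanSpace ℝ (Fin d)),
      (∑' n : ↥(fourierDualSet (latticeOfGen F)),
          ((ψ (ζ + n) : ℝ) : ℂ)) ^ 2 =
        (∑' n : ↥(fourierDualSet (latticeOfGen F)), ((ψ (ζ + n) : ℝ) : ℂ)) *
          twistedPeriodization (fourierDualSet (latticeOfGen A0)) ψ (u j) ζ) ∧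
    -- (ii) φ = (1/N) Σ_j φ_j
    (∀ ζ : EuclideanSpace ℝ (Fin d),
      (∑' n : ↥(fourierDualSet (latticeOfGen F)), ((ψ (ζ + n) : ℝ) : ℂ)) =
        (1 / (N : ℂ)) * ∑ j : Fin N,
          twistedPeriodization (fourierDualSet (latticeOfGen A0)) ψ (u j) ζ) :=
  periodized_lattice_charfun_identities_general A0 F hnested N hN u hu hcover hdisj ψ hsupp
end
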